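/- arXiv:math/0510293 — 3 statements merged into one kernel-verified Lean document; each statement's English description precedes it below -/
import Mathlib

section
/- For a prime ℓ and a primitive ℓ-th root of unity ζ_ℓ, the trace from ℚ(ζ_ℓ) to ℚ of 1/(ζ_ℓ - 1)² equals (ℓ-1)²/4 - (ℓ-1)(ℓ-2)/3. -/
/-!
Summation by parts gives `(ζ - 1) * S = ℓ` for `S = ∑_{j<ℓ} j ζ^j`, so `1 / (ζ - 1)^2 = S^2 / ℓ^2`.
Since `Tr(ζ^m)` is `ℓ - 1` or `-1` according as `ℓ ∣ m` or not, expanding `S^2` gives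
`Tr(S^2) = ℓ * ∑_{j<ℓ} j (ℓ - j) - (∑_{j<ℓ} j)^2`: for `0 < j < ℓ` the only `k < ℓ` with
`ℓ ∣ j + k` is `k = ℓ - j`. The closed forms of the two sums finish the computation.
-/

open Finset Polynomial

section Sums

variable {R : Type*} [Field R] [CharZero R]

theorem sum_range_natCast (n : ℕ) : ∑ j ∈ range n, (j : R) = n * (n - 1) / 2 := by
  induction n with
  | zero => simp
  | succ n ih => rw [sum_range_succ, ih]; push_cast; ring

theorem sum_range_natCast_mul_sub (n : ℕ) :
    ∑ j ∈ range n, (j : R) * (n - j) = (n + 1) * n * (n - 1) / 6 := by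
  induction n with
  | zero => simp
  | succ n ih =>
    have hsplit : ∀ j ∈ range n, (j : R) * ((n + 1 : ℕ) - j) = j * (n - j) + j := by
      intro j _; push_cast; ring
    rw [sum_range_succ, sum_congr rfl hsplit, sum_add_distrib, ih, sum_range_natCast]
    push_cast; ring

end Sums

theorem sub_one_mul_sum_range_mul_pow {R : Type*} [CommRing R] (x : R) (n : ℕ) :
    (x - 1) * ∑ j ∈ range n, (j : R) * x ^ j = n * x ^ n - x * ∑ j ∈ range n, x ^ j := by
  induction n with
  | zero => simp
  | succ n ih => rw [sum_range_succ, mul_add, ih, sum_range_succ]; push_cast; ring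

theorem IsPrimitiveRoot.sub_one_mul_sum_range_mul_pow {R : Type*} [CommRing R] [IsDomain R]
    {ζ : R} {n : ℕ} (hζ : IsPrimitiveRoot ζ n) (hn : 1 < n) :
    (ζ - 1) * ∑ j ∈ range n, (j : R) * ζ ^ j = n := by
  rw [_root_.sub_one_mul_sum_range_mul_pow, hζ.pow_eq_one, hζ.geom_sum_eq_zero hn]
  ring

theorem Nat.eq_sub_of_dvd_add {n j k : ℕ} (hj₀ : 0 < j) (hj : j < n) (hk : k < n)
    (h : n ∣ j + k) : k = n - j := by
  obtain ⟨c, hc⟩ := h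
  have hc2 : c < 2 := Nat.lt_of_mul_lt_mul_left (a := n) (by omega)
  interval_cases c <;> omega

theorem sum_range_ite_dvd_add_mul {R : Type*} [CommRing R] {n j : ℕ} (hj : j < n) :
    ∑ k ∈ range n, (if n ∣ j + k then (j * k : R) else 0) = j * (n - j) := by
  rcases Nat.eq_zero_or_pos j with rfl | hj₀
  · simp
  rw [sum_eq_single_of_mem (n - j) (mem_range.2 (by omega)),
    if_pos (by rw [Nat.add_sub_cancel' hj.le]), Nat.cast_sub hj.le]
  intro k hk hne
  exact if_neg fun h => hne (Nat.eq_sub_of_dvd_add hj₀ hj (mem_range.1 hk) h)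

theorem Polynomial.nextCoeff_cyclotomic_prime (R : Type*) [Ring R] [Nontrivial R] (p : ℕ)
    [hp : Fact p.Prime] : (cyclotomic p R).nextCoeff = 1 := by
  have h2 := hp.out.two_le
  have hdeg : (cyclotomic p R).natDegree = p - 1 := by
    rw [natDegree_cyclotomic, Nat.totient_prime hp.out]
  rw [nextCoeff_of_natDegree_pos (by omega), hdeg, cyclotomic_prime]
  simp only [finsetSum_coeff, coeff_X_pow, sum_ite_eq, mem_range]
  exact if_pos (by omega)

namespace IsPrimitiveRoot

variable {p : ℕ} [hp : Fact p.Prime] {K L : Type*} [Field K] [Field L] [Algebra K L]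
  [IsCyclotomicExtension {p} K L] (hirr : Irreducible (cyclotomic p K))
  {ζ : L} (hζ : IsPrimitiveRoot ζ p)
include hirr hζ

theorem trace_eq_neg_one : Algebra.trace K L ζ = -1 := by
  have := IsCyclotomicExtension.neZero' p K L
  rw [← hζ.powerBasis_gen K, PowerBasis.trace_gen_eq_nextCoeff_minpoly, hζ.powerBasis_gen K,
    ← hζ.minpoly_eq_cyclotomic_of_irreducible hirr, nextCoeff_cyclotomic_prime]

theorem trace_pow (m : ℕ) :
    Algebra.trace K L (ζ ^ m) = if p ∣ m then (p : K) - 1 else -1 := by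
  split_ifs with hm
  · obtain ⟨c, rfl⟩ := hm
    rw [pow_mul, hζ.pow_eq_one, one_pow, ← map_one (algebraMap K L), Algebra.trace_algebraMap,
      IsCyclotomicExtension.finrank L hirr, Nat.totient_prime hp.out, nsmul_one,
      Nat.cast_pred hp.out.pos]
  · have hcop : m.Coprime p := Nat.coprime_comm.1 (hp.out.coprime_iff_not_dvd.2 hm)
    exact (hζ.pow_of_coprime m hcop).trace_eq_neg_one hirr

theorem trace_sq_sum_range_mul_pow :
    Algebra.trace K L ((∑ j ∈ range p, (j : L) * ζ ^ j) ^ 2) =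
      p * ∑ j ∈ range p, (j : K) * (p - j) - (∑ j ∈ range p, (j : K)) ^ 2 := by
  have hterm (j k : ℕ) : Algebra.trace K L ((j : L) * ζ ^ j * ((k : L) * ζ ^ k)) =
      p * (if p ∣ j + k then (j * k : K) else 0) - j * k := by
    rw [show (j : L) * ζ ^ j * ((k : L) * ζ ^ k) = (j * k : K) • ζ ^ (j + k) by
      rw [Algebra.smul_def]; push_cast; ring, map_smul, hζ.trace_pow hirr, smul_eq_mul]
    split_ifs <;> ring
  calc Algebra.trace K L ((∑ j ∈ range p, (j : L) * ζ ^ j) ^ 2)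
      = ∑ j ∈ range p, ∑ k ∈ range p,
          (p * (if p ∣ j + k then (j * k : K) else 0) - j * k) := by
        simp only [sq, sum_mul_sum, map_sum, hterm]
    _ = p * ∑ j ∈ range p, (j : K) * (p - j) - (∑ j ∈ range p, (j : K)) ^ 2 := by
        rw [sum_congr rfl fun j _ => sum_sub_distrib .., sum_sub_distrib, sq, sum_mul_sum]
        simp only [← mul_sum]
        rw [sum_congr rfl fun j hj => sum_range_ite_dvd_add_mul (mem_range.1 hj)]

end IsPrimitiveRoot

/-- For a prime `ℓ` and a primitive `ℓ`-th root of unity `ζ`, the trace from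
`ℚ(ζ)` to `ℚ` of `1/(ζ - 1)²` equals `(ℓ-1)²/4 - (ℓ-1)(ℓ-2)/3`. -/
theorem trace_one_div_zeta_sub_one_sq (ℓ : ℕ) (hℓ : ℓ.Prime)
    (K : Type*) [Field K] [Algebra ℚ K]
    [IsCyclotomicExtension {ℓ} ℚ K]
    (ζ : K) (hζ : IsPrimitiveRoot ζ ℓ) :
    Algebra.trace ℚ K (1 / (ζ - 1) ^ 2) =
      ((ℓ : ℚ) - 1) ^ 2 / 4 - ((ℓ : ℚ) - 1) * ((ℓ : ℚ) - 2) / 3 := by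
  have := Fact.mk hℓ
  have := charZero_of_injective_algebraMap (algebraMap ℚ K).injective
  set S := ∑ j ∈ range ℓ, (j : K) * ζ ^ j
  have hS : (ζ - 1) * S = ℓ := hζ.sub_one_mul_sum_range_mul_pow hℓ.one_lt
  have hS0 : S ≠ 0 := right_ne_zero_of_mul (hS ▸ Nat.cast_ne_zero.2 hℓ.ne_zero)
  have hinv : 1 / (ζ - 1) ^ 2 = ((ℓ : ℚ) ^ 2)⁻¹ • S ^ 2 := by
    rw [Algebra.smul_def, map_inv₀, map_pow, map_natCast, ← hS]
    field_simp
  have hℓ0 : (ℓ : ℚ) ≠ 0 := Nat.cast_ne_zero.2 hℓ.ne_zero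
  rw [hinv, map_smul, hζ.trace_sq_sum_range_mul_pow (cyclotomic.irreducible_rat hℓ.pos),
    sum_range_natCast_mul_sub, sum_range_natCast, smul_eq_mul]
  field_simp
  ring
end

section
/- Let d ≥ 2 and let ζ be any root of unity whose order is coprime to d (or more generally ζ^ℓ ≠ 1 for all divisors ℓ of d). Then ∑_{ρ: o(ρ)=d} ζ/(ζ - ρ) = ∑_{ℓ | d} ℓ·μ(d/ℓ)·ζ^ℓ/(ζ^ℓ - 1), where the left sum is over primitive d-th roots of unity ρ. -/
/-!
Evaluating the logarithmic derivative of `X ^ n - 1 = ∏_{ρ ∈ μ_n} (X - ρ)` at `ζ` gives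
`∑_{ρ ∈ μ_n} ζ / (ζ - ρ) = n ζ^n / (ζ^n - 1)` for every `n ∣ d`. Since `μ_n` is the disjoint union
of the primitive `ℓ`-th roots of unity for `ℓ ∣ n`, the left side is the divisor sum of
`ℓ ↦ ∑_{o(ρ) = ℓ} ζ / (ζ - ρ)`, and Möbius inversion recovers the sum over primitive roots.
-/

open Polynomial Finset

theorem Polynomial.sum_inv_sub_eq_eval_derivative_div_eval {K : Type*} [Field K]
    (s : Finset K) {x : K} (hx : x ∉ s) :
    ∑ a ∈ s, (x - a)⁻¹ =
      (derivative (∏ a ∈ s, (X - C a))).eval x / (∏ a ∈ s, (X - C a)).eval x := by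
  classical
  have hne : ∀ a ∈ s, x - a ≠ 0 := fun a ha h => hx (sub_eq_zero.mp h ▸ ha)
  simp only [derivative_prod_finset, derivative_X_sub_C, mul_one, eval_finsetSum, eval_prod,
    eval_sub, eval_X, eval_C, sum_div]
  refine sum_congr rfl fun a ha => ?_
  rw [← mul_prod_erase s (fun b => x - b) ha, div_mul_cancel_right₀ (prod_ne_zero_iff.mpr
    fun b hb => hne b (mem_of_mem_erase hb))]

theorem IsPrimitiveRoot.sum_div_sub_nthRootsFinset {K : Type*} [Field K] {n : ℕ} {ξ : K}
    (hξ : IsPrimitiveRoot ξ n) {ζ : K} (hζ : ζ ^ n ≠ 1) :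
    ∑ ρ ∈ nthRootsFinset n (1 : K), ζ / (ζ - ρ) = n * ζ ^ n / (ζ ^ n - 1) := by
  have hn : 0 < n := Nat.pos_of_ne_zero fun h => hζ (h ▸ pow_zero ζ)
  have hζ_root : ζ ∉ nthRootsFinset n (1 : K) := by
    rwa [Polynomial.mem_nthRootsFinset hn]
  simp only [div_eq_mul_inv ζ, ← mul_sum,
    sum_inv_sub_eq_eval_derivative_div_eval _ hζ_root,
    ← X_pow_sub_one_eq_prod hn hξ]
  simp only [derivative_sub, derivative_X_pow, derivative_one, sub_zero, eval_mul, eval_C,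
    eval_pow, eval_X, eval_sub, eval_one]
  rw [← mul_div_assoc, mul_left_comm, mul_pow_sub_one hn.ne']

theorem sum_nthRootsFinset_eq_sum_divisors_sum_primitiveRoots {R M : Type*} [CommRing R]
    [IsDomain R] [AddCommMonoid M] (n : ℕ) (f : R → M) :
    ∑ ρ ∈ nthRootsFinset n (1 : R), f ρ = ∑ ℓ ∈ n.divisors, ∑ ρ ∈ primitiveRoots ℓ R, f ρ := by
  classical
  rw [IsPrimitiveRoot.nthRoots_one_eq_biUnion_primitiveRoots,
    sum_biUnion fun _ _ _ _ h => IsPrimitiveRoot.disjoint h]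

theorem sum_over_primitive_roots_general (K : Type*) [Field K]
    (d : ℕ) (hroots : ∃ ξ : K, IsPrimitiveRoot ξ d)
    (ζ : K) (hζ : ∀ ℓ ∈ d.divisors, ζ ^ ℓ ≠ 1) :
    ∑ ρ ∈ primitiveRoots d K, ζ / (ζ - ρ) =
      ∑ ℓ ∈ d.divisors,
        (ℓ : K) * ((ArithmeticFunction.moebius (d / ℓ) : ℤ) : K) *
          (ζ ^ ℓ / (ζ ^ ℓ - 1)) := by
  obtain ⟨ξ, hξ⟩ := hroots
  rcases d.eq_zero_or_pos with rfl | hd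
  · simp
  have hdivisor_sum : ∀ n > 0, n ∈ {m : ℕ | m ∣ d} →
      ∑ ℓ ∈ n.divisors, ∑ ρ ∈ primitiveRoots ℓ K, ζ / (ζ - ρ) = n * ζ ^ n / (ζ ^ n - 1) := by
    rintro n hn ⟨k, hk⟩
    rw [← sum_nthRootsFinset_eq_sum_divisors_sum_primitiveRoots,
      (hξ.pow hd (hk.trans (mul_comm n k))).sum_div_sub_nthRootsFinset
        (hζ n (Nat.mem_divisors.mpr ⟨⟨k, hk⟩, hd.ne'⟩))]
  have hinv := (ArithmeticFunction.sum_eq_iff_sum_mul_moebius_eq_on _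
    (fun _ _ hmn hn => dvd_trans hmn hn)).mp hdivisor_sum d hd dvd_rfl
  rw [← hinv, Nat.sum_divisorsAntidiagonal' fun x y =>
    ((ArithmeticFunction.moebius x : ℤ) : K) * (y * ζ ^ y / (ζ ^ y - 1))]
  exact sum_congr rfl fun ℓ _ => by ring

/-- Let `d ≥ 2` and let `ζ` be an element of a field `K` of characteristic zero
containing a primitive `d`-th root of unity, with `ζ^ℓ ≠ 1` for every divisor `ℓ` of `d`.
Then `∑_{ρ : o(ρ) = d} ζ/(ζ - ρ) = ∑_{ℓ ∣ d} ℓ·μ(d/ℓ)·ζ^ℓ/(ζ^ℓ - 1)`, where the left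
sum is over the primitive `d`-th roots of unity in `K`. -/
theorem sum_over_primitive_roots (K : Type*) [Field K] [CharZero K]
    (d : ℕ) (hd : 2 ≤ d) (hroots : ∃ ξ : K, IsPrimitiveRoot ξ d)
    (ζ : K) (hζ : ∀ ℓ ∈ d.divisors, ζ ^ ℓ ≠ 1) :
    ∑ ρ ∈ primitiveRoots d K, ζ / (ζ - ρ) =
      ∑ ℓ ∈ d.divisors,
        (ℓ : K) * ((ArithmeticFunction.moebius (d / ℓ) : ℤ) : K) *
          (ζ ^ ℓ / (ζ ^ ℓ - 1)) :=
  sum_over_primitive_roots_general K d hroots ζ hζ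
end

section
/- Let p be an odd prime and for α ∈ μ_{p-1}, n ≥ 0, define u_n(α) = ∑_{1 ≤ k ≤ p^{n+1}-1, p ∤ k} α^k σ_n(k) in the group ring ℤ_p[Gal(ℚ_p(ζ_{p^{n+1}})/ℚ_p)], where σ_n(k) is the automorphism sending ζ_{p^{n+1}} to ζ_{p^{n+1}}^k. Then under the restriction map from level n+1 to level n, Res_{n+1,n}(u_{n+1}(α)) = u_n(α). -/
/-!
Restriction sends `σ_{n+1}(k)` to `σ_n(k mod p^{n+1})`, and the units mod `p^{n+2}` above a unit
`k` mod `p^{n+1}` are the `p` residues `k + p^{n+1} ℓ`, `0 ≤ ℓ < p`. Since `α^p = α`, also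
`α^{p^{n+1}} = α`, so the coefficient of `σ_n(k)` in the image is
`α^k (1 + α + ⋯ + α^{p-1})`; the geometric sum equals `(α^p - 1)/(α - 1) = 1` because `α ≠ 1`.
-/

open Finset

theorem geom_sum_eq_one_of_pow_eq_self {R : Type*} [Ring R] [NoZeroDivisors R] {x : R} {n : ℕ}
    (hx : x ≠ 1) (h : x ^ n = x) : ∑ i ∈ range n, x ^ i = 1 :=
  mul_right_cancel₀ (sub_ne_zero.mpr hx) (by rw [geom_sum_mul, h, one_mul])

theorem pow_pow_eq_self_of_pow_eq_self {M : Type*} [Monoid M] {x : M} {n : ℕ} (h : x ^ n = x) :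
    ∀ k, x ^ n ^ k = x
  | 0 => pow_one x
  | k + 1 => by rw [pow_succ, pow_mul, pow_pow_eq_self_of_pow_eq_self h k, h]

theorem MonoidAlgebra.mapDomain_sum_single {R M N : Type*} [Semiring R] [Fintype M] [Fintype N]
    [DecidableEq N] (f : M → N) (c : M → R) :
    mapDomain f (∑ m, single m (c m)) = ∑ n, single n (∑ m with f m = n, c m) := by
  calc _ = ∑ m, single (f m) (c m) :=
        (map_sum (mapDomainLinearMap ℕ R f) _ univ).trans
          (sum_congr rfl fun m _ => mapDomainLinearMap_single f (c m) m)
    _ = ∑ n, ∑ m with f m = n, single n (c m) := by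
        rw [← sum_fiberwise univ f]
        exact sum_congr rfl fun n _ => sum_congr rfl fun m hm => by rw [(mem_filter.mp hm).2]
    _ = _ := sum_congr rfl fun n _ => (map_sum (singleAddHom n) c _).symm

theorem ZMod.val_cast_eq_val_mod {M N : ℕ} [NeZero M] (a : ZMod M) :
    (ZMod.cast a : ZMod N).val = a.val % N := by
  rw [ZMod.cast_eq_val, ZMod.val_natCast]

theorem Nat.Coprime.add_mul_left_mul_of_dvd {r N p : ℕ} (hr : r.Coprime N) (hp : p ∣ N) (ℓ : ℕ) :
    (r + N * ℓ).Coprime (N * p) :=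
  have h : (r + N * ℓ).Coprime N := (Nat.coprime_add_mul_left_left r N ℓ).2 hr
  h.mul_right (h.coprime_dvd_right hp)

section UnitsFiber

variable {N p : ℕ} [NeZero N] [NeZero p]

theorem ZMod.unitsMap_castHom_eq_iff (h : (ZMod (N * p))ˣ) (g : (ZMod N)ˣ) :
    Units.map (ZMod.castHom (dvd_mul_right N p) (ZMod N)).toMonoidHom h = g ↔
      (h : ZMod (N * p)).val % N = (g : ZMod N).val := by
  rw [Units.ext_iff, ← ZMod.val_cast_eq_val_mod]
  exact (ZMod.val_injective N).eq_iff.symm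

theorem ZMod.sum_units_fiber_castHom {A : Type*} [AddCommMonoid A] (hp : p ∣ N) (φ : ℕ → A)
    (g : (ZMod N)ˣ) :
    ∑ h : (ZMod (N * p))ˣ with
        Units.map (ZMod.castHom (dvd_mul_right N p) (ZMod N)).toMonoidHom h = g,
      φ (h : ZMod (N * p)).val =
    ∑ ℓ ∈ range p, φ ((g : ZMod N).val + N * ℓ) := by
  have hr : (g : ZMod N).val < N := ZMod.val_lt _
  have hN : 0 < N := Nat.pos_of_neZero N
  let lift (ℓ : ℕ) : (ZMod (N * p))ˣ :=
    ZMod.unitOfCoprime _ ((ZMod.val_coe_unit_coprime g).add_mul_left_mul_of_dvd hp ℓ)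
  have val_lift {ℓ : ℕ} (hℓ : ℓ < p) : (lift ℓ : ZMod (N * p)).val = (g : ZMod N).val + N * ℓ := by
    rw [ZMod.coe_unitOfCoprime, ZMod.val_natCast, Nat.mod_eq_of_lt]
    nlinarith
  refine sum_nbij' (fun h => (h : ZMod (N * p)).val / N) lift ?_ ?_ ?_ ?_ ?_
  all_goals simp only [mem_filter, mem_univ, true_and, mem_range, ZMod.unitsMap_castHom_eq_iff]
  · intro h _
    exact Nat.div_lt_of_lt_mul (ZMod.val_lt _)
  · intro ℓ hℓ
    rw [val_lift hℓ, Nat.add_mul_mod_self_left, Nat.mod_eq_of_lt hr]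
  · intro h hh
    refine Units.ext (ZMod.val_injective _ ?_)
    rw [val_lift (Nat.div_lt_of_lt_mul (ZMod.val_lt _)), ← hh, Nat.mod_add_div]
  · intro ℓ hℓ
    rw [val_lift hℓ, Nat.add_mul_div_left _ _ hN, Nat.div_eq_of_lt hr, zero_add]
  · intro h hh
    rw [← hh, Nat.mod_add_div]

end UnitsFiber

/-- Let `p` be an odd prime and `α ∈ μ_{p-1} ⊂ ℤ_p`, `α ≠ 1`.  Identifying
`Gal(ℚ_p(ζ_{p^{m}})/ℚ_p)` with `(ℤ/p^{m})ˣ` (with `σ(k)` corresponding to the class of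
`k`), the element `u_n(α) = ∑_{1 ≤ k ≤ p^{n+1}-1, p ∤ k} α^k σ_n(k)` of the group ring
`ℤ_p[(ℤ/p^{n+1})ˣ]` is written as `∑_{g} α^{val g}·g`.  The restriction map from level
`n+1` to level `n` (induced on group rings by `(ℤ/p^{n+2})ˣ → (ℤ/p^{n+1})ˣ`) satisfies
`Res_{n+1,n}(u_{n+1}(α)) = u_n(α)`. -/
theorem res_u_eq (p : ℕ) [Fact p.Prime]
    (α : ℤ_[p]) (hα : α ^ (p - 1) = 1) (hα1 : α ≠ 1) (n : ℕ) :
    MonoidAlgebra.mapDomain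
        (fun g => Units.map
          (ZMod.castHom (pow_dvd_pow p (by omega : n + 1 ≤ n + 2))
            (ZMod (p ^ (n + 1)))).toMonoidHom g)
        (∑ g : (ZMod (p ^ (n + 2)))ˣ,
          MonoidAlgebra.single g (α ^ ((g : ZMod (p ^ (n + 2))).val))
          : MonoidAlgebra ℤ_[p] (ZMod (p ^ (n + 2)))ˣ) =
      (∑ g : (ZMod (p ^ (n + 1)))ˣ,
        MonoidAlgebra.single g (α ^ ((g : ZMod (p ^ (n + 1))).val))
        : MonoidAlgebra ℤ_[p] (ZMod (p ^ (n + 1)))ˣ) := by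
  have hp : p.Prime := Fact.out
  have hαp : α ^ p = α := by
    rw [← pow_sub_one_mul hp.ne_zero, hα, one_mul]
  rw [MonoidAlgebra.mapDomain_sum_single]
  refine sum_congr rfl fun g _ => congrArg _ ?_
  -- `p ^ (n + 2)` unfolds definitionally to `p ^ (n + 1) * p`, the shape of the fiber lemma.
  calc _ = ∑ ℓ ∈ range p, α ^ ((g : ZMod (p ^ (n + 1))).val + p ^ (n + 1) * ℓ) :=
        ZMod.sum_units_fiber_castHom (dvd_pow_self p n.succ_ne_zero) (α ^ ·) g
    _ = α ^ (g : ZMod (p ^ (n + 1))).val * ∑ ℓ ∈ range p, α ^ ℓ := by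
        simp only [pow_add, pow_mul, pow_pow_eq_self_of_pow_eq_self hαp, mul_sum]
    _ = _ := by rw [geom_sum_eq_one_of_pow_eq_self hα1 hαp, mul_one]
end
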